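/- arXiv:1403.5729 — 2 statements merged into one kernel-verified Lean document; each statement's English description precedes it below -/
import Mathlib

section
/- Let K be a semiring, n ≥ 1, and let 𝓜 be a finite set of partial 0/1-matrices in K^{n×n}. Then 𝓜 is synchronizable if and only if 𝓜 is location synchronizable. -/
/-- A matrix over a semiring is a *partial 0/1-matrix* if every row contains at most one
nonzero entry, and every nonzero entry equals `1`. -/
def IsPartial01 {K : Type*} [Semiring K] {n : ℕ} (A : Matrix (Fin n) (Fin n) K) : Prop :=
  (∀ i j, A i j ≠ 0 → A i j = 1) ∧ (∀ i j j', A i j ≠ 0 → A i j' ≠ 0 → j = j')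

/-- A matrix is *location synchronizing* if there is a column index `i` such that an entry
`A j k` is nonzero exactly when `k = i`. -/
def IsLocSync {K : Type*} [Semiring K] {n : ℕ} (A : Matrix (Fin n) (Fin n) K) : Prop :=
  ∃ i, ∀ j k, A j k ≠ 0 ↔ k = i

/-- A matrix is *synchronizing* if it is location synchronizing and all entries of the
designated column coincide. -/
def IsSync {K : Type*} [Semiring K] {n : ℕ} (A : Matrix (Fin n) (Fin n) K) : Prop :=
  ∃ i, (∀ j k, A j k ≠ 0 ↔ k = i) ∧ (∀ j j', A j i = A j' i)

/-- A set of matrices is *synchronizable* if some nonempty finite product of its elements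
(with repetitions allowed) is synchronizing. -/
def IsSynchronizable {K : Type*} [Semiring K] {n : ℕ}
    (S : Set (Matrix (Fin n) (Fin n) K)) : Prop :=
  ∃ l : List (Matrix (Fin n) (Fin n) K), l ≠ [] ∧ (∀ A ∈ l, A ∈ S) ∧ IsSync l.prod

/-- A set of matrices is *location synchronizable* if some nonempty finite product of its
elements (with repetitions allowed) is location synchronizing. -/
def IsLocSynchronizable {K : Type*} [Semiring K] {n : ℕ}
    (S : Set (Matrix (Fin n) (Fin n) K)) : Prop :=
  ∃ l : List (Matrix (Fin n) (Fin n) K), l ≠ [] ∧ (∀ A ∈ l, A ∈ S) ∧ IsLocSync l.prod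

section

variable {K : Type*} [Semiring K] {n : ℕ}

lemma isPartial01_one : IsPartial01 (1 : Matrix (Fin n) (Fin n) K) := by
  have hdiag : ∀ i j, (1 : Matrix (Fin n) (Fin n) K) i j ≠ 0 → i = j :=
    fun i j h => by_contra fun hij => h (Matrix.one_apply_ne hij)
  refine ⟨fun i j h => ?_, fun i j j' h h' => (hdiag i j h).symm.trans (hdiag i j' h')⟩
  obtain rfl := hdiag i j h
  exact Matrix.one_apply_eq i

lemma IsPartial01.mul_row_eq_zero_or_exists {A : Matrix (Fin n) (Fin n) K} (hA : IsPartial01 A)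
    (B : Matrix (Fin n) (Fin n) K) (i : Fin n) : (A * B) i = 0 ∨ ∃ k, (A * B) i = B k := by
  by_cases h : ∃ k, A i k ≠ 0
  · obtain ⟨k, hk⟩ := h
    refine Or.inr ⟨k, funext fun j => ?_⟩
    have hzero : ∀ k' ∈ Finset.univ, k' ≠ k → A i k' * B k' j = 0 := fun k' _ hk' => by
      rw [not_ne_iff.mp (mt (hA.2 i k' k · hk) hk'), zero_mul]
    rw [Matrix.mul_apply, Finset.sum_eq_single k hzero (by simp), hA.1 i k hk, one_mul]
  · push Not at h
    exact Or.inl (funext fun j => by simp [Matrix.mul_apply, h])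

lemma IsPartial01.mul {A B : Matrix (Fin n) (Fin n) K} (hA : IsPartial01 A)
    (hB : IsPartial01 B) : IsPartial01 (A * B) := by
  refine ⟨fun i j hij => ?_, fun i j j' hij hij' => ?_⟩
  · obtain h | ⟨k, h⟩ := hA.mul_row_eq_zero_or_exists B i <;> rw [h] at hij ⊢
    · exact absurd rfl hij
    · exact hB.1 k j hij
  · obtain h | ⟨k, h⟩ := hA.mul_row_eq_zero_or_exists B i <;> rw [h] at hij hij'
    · exact absurd rfl hij
    · exact hB.2 k j j' hij hij'

lemma isPartial01_list_prod {l : List (Matrix (Fin n) (Fin n) K)}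
    (hl : ∀ A ∈ l, IsPartial01 A) : IsPartial01 l.prod := by
  induction l with
  | nil => exact isPartial01_one
  | cons A l ih =>
    rw [List.prod_cons]
    exact (hl A List.mem_cons_self).mul (ih fun B hB => hl B (List.mem_cons_of_mem A hB))

lemma IsSync.isLocSync {A : Matrix (Fin n) (Fin n) K} (hA : IsSync A) : IsLocSync A :=
  let ⟨i, hloc, _⟩ := hA
  ⟨i, hloc⟩

/-- The designated column of a location synchronizing matrix has no zero entry, so for a
partial 0/1-matrix it is constantly `1`. -/
lemma IsPartial01.isSync_iff_isLocSync {A : Matrix (Fin n) (Fin n) K} (hA : IsPartial01 A) :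
    IsSync A ↔ IsLocSync A := by
  refine ⟨IsSync.isLocSync, fun ⟨i, hloc⟩ => ⟨i, hloc, fun j j' => ?_⟩⟩
  rw [hA.1 j i ((hloc j i).2 rfl), hA.1 j' i ((hloc j' i).2 rfl)]

lemma isSynchronizable_iff_isLocSynchronizable {S : Set (Matrix (Fin n) (Fin n) K)}
    (hS : ∀ A ∈ S, IsPartial01 A) : IsSynchronizable S ↔ IsLocSynchronizable S :=
  exists_congr fun _ => and_congr_right fun _ => and_congr_right fun hl =>
    (isPartial01_list_prod fun A hA => hS A (hl A hA)).isSync_iff_isLocSync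

end

theorem partial01_synchronizable_iff_locSynchronizable_general {K : Type*} [Semiring K] {n : ℕ}
    (𝓜 : Finset (Matrix (Fin n) (Fin n) K))
    (h𝓜 : ∀ A ∈ 𝓜, IsPartial01 A) :
    IsSynchronizable (𝓜 : Set (Matrix (Fin n) (Fin n) K)) ↔
      IsLocSynchronizable (𝓜 : Set (Matrix (Fin n) (Fin n) K)) :=
  isSynchronizable_iff_isLocSynchronizable h𝓜

/-- A finite set of partial 0/1-matrices is synchronizable iff it is location
synchronizable. -/
theorem partial01_synchronizable_iff_locSynchronizable {K : Type*} [Semiring K] {n : ℕ}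
    (hn : 1 ≤ n) (𝓜 : Finset (Matrix (Fin n) (Fin n) K))
    (h𝓜 : ∀ A ∈ 𝓜, IsPartial01 A) :
    IsSynchronizable (𝓜 : Set (Matrix (Fin n) (Fin n) K)) ↔
      IsLocSynchronizable (𝓜 : Set (Matrix (Fin n) (Fin n) K)) :=
  partial01_synchronizable_iff_locSynchronizable_general 𝓜 h𝓜
end

section
/- Fix k ≥ 1 and nonempty binary words u_1,…,u_k, v_1,…,v_k. With M(u) = [[3^{|u|},0],[int(u),1]] ∈ ℕ^{2×2}, define for 1 ≤ i ≤ k the block-diagonal matrix A_i = blockdiag(M(u_i), M(u_i), M(v_i)) ∈ ℕ^{6×6}, and let B ∈ ℕ^{6×6} be the matrix whose rows 1 and 2 are (int(u₁), 1, int(u₁), 1, 0, 0), whose rows 3 and 4 are (0, 0, int(u₁), 1, 0, 0), and whose rows 5 and 6 are (0, 0, 0, 0, int(v₁), 1). Then for every n ≥ 0 and every matrix P of the form P = D_0·B·D_1·B·D_2 ⋯ B·D_n (containing exactly n factors B), where each D_j belongs to the submonoid of ℕ^{6×6} generated by {A_1,…,A_k}, there exist matrices X, Y ∈ ℕ^{2×2}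 such that P, viewed as a 3×3 array of 2×2 blocks, equals [[X, n·X, 0],[0, X, 0],[0, 0, Y]], where n·X denotes the entrywise multiple of X by n. -/
/-- The value of a binary word (most significant digit first) read as a ternary number. -/
def ternVal (u : List Bool) : ℕ :=
  u.foldl (fun a b => 3 * a + cond b 1 0) 0

/-- `M(u) = [[3^{|u|}, 0],[int(u), 1]]`. -/
def Mword (u : List Bool) : Matrix (Fin 2) (Fin 2) ℕ :=
  !![3 ^ u.length, 0; ternVal u, 1]

/-- The `6 × 6` block-diagonal matrix with `2 × 2` diagonal blocks `X, Y, Z`. -/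
def blockDiag3 (X Y Z : Matrix (Fin 2) (Fin 2) ℕ) : Matrix (Fin 6) (Fin 6) ℕ :=
  !![X 0 0, X 0 1, 0, 0, 0, 0;
     X 1 0, X 1 1, 0, 0, 0, 0;
     0, 0, Y 0 0, Y 0 1, 0, 0;
     0, 0, Y 1 0, Y 1 1, 0, 0;
     0, 0, 0, 0, Z 0 0, Z 0 1;
     0, 0, 0, 0, Z 1 0, Z 1 1]

/-- The matrix `B` whose rows 1 and 2 are `(int u₁, 1, int u₁, 1, 0, 0)`, whose rows 3 and 4
are `(0, 0, int u₁, 1, 0, 0)`, and whose rows 5 and 6 are `(0, 0, 0, 0, int v₁, 1)`. -/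
def Bbig (u₁ v₁ : List Bool) : Matrix (Fin 6) (Fin 6) ℕ :=
  !![ternVal u₁, 1, ternVal u₁, 1, 0, 0;
     ternVal u₁, 1, ternVal u₁, 1, 0, 0;
     0, 0, ternVal u₁, 1, 0, 0;
     0, 0, ternVal u₁, 1, 0, 0;
     0, 0, 0, 0, ternVal v₁, 1;
     0, 0, 0, 0, ternVal v₁, 1]

@[simp] lemma cons_val_five' {α : Type*} {m : ℕ} (x : α) (u : Fin (m+5) → α) :
    Matrix.vecCons x u 5 =
      Matrix.vecHead (Matrix.vecTail (Matrix.vecTail (Matrix.vecTail (Matrix.vecTail u)))) :=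
  rfl

/-- Block form `[[X, m·X, 0],[0, X, 0],[0, 0, Y]]`. -/
def Fblk (m : ℕ) (X Y : Matrix (Fin 2) (Fin 2) ℕ) : Matrix (Fin 6) (Fin 6) ℕ :=
  !![X 0 0, X 0 1, m * X 0 0, m * X 0 1, 0, 0;
     X 1 0, X 1 1, m * X 1 0, m * X 1 1, 0, 0;
     0, 0, X 0 0, X 0 1, 0, 0;
     0, 0, X 1 0, X 1 1, 0, 0;
     0, 0, 0, 0, Y 0 0, Y 0 1;
     0, 0, 0, 0, Y 1 0, Y 1 1]

set_option maxHeartbeats 2000000 in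
lemma Fblk_mul (m m' : ℕ) (X Y X' Y' : Matrix (Fin 2) (Fin 2) ℕ) :
    Fblk m X Y * Fblk m' X' Y' = Fblk (m + m') (X * X') (Y * Y') := by
  ext i j
  fin_cases i <;> fin_cases j <;>
    · simp [Fblk, Matrix.mul_apply, Fin.sum_univ_succ, Matrix.vecHead, Matrix.vecTail]
      try ring

lemma Fblk_one : (1 : Matrix (Fin 6) (Fin 6) ℕ) = Fblk 0 1 1 := by
  decide

lemma blockDiag3_eq (X Z : Matrix (Fin 2) (Fin 2) ℕ) :
    blockDiag3 X X Z = Fblk 0 X Z := by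
  ext i j
  fin_cases i <;> fin_cases j <;>
    simp [Fblk, blockDiag3, Matrix.vecHead, Matrix.vecTail]

lemma Bbig_eq (u₁ v₁ : List Bool) :
    Bbig u₁ v₁ = Fblk 1 !![ternVal u₁, 1; ternVal u₁, 1] !![ternVal v₁, 1; ternVal v₁, 1] := by
  ext i j
  fin_cases i <;> fin_cases j <;>
    simp [Fblk, Bbig, Matrix.vecHead, Matrix.vecTail]

lemma closure_form {k : ℕ} (u v : Fin k → List Bool)
    {P : Matrix (Fin 6) (Fin 6) ℕ}
    (hP : P ∈ Submonoid.closure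
      (Set.range fun i => blockDiag3 (Mword (u i)) (Mword (u i)) (Mword (v i)))) :
    ∃ X Y, P = Fblk 0 X Y := by
  induction hP using Submonoid.closure_induction with
  | mem x hx =>
    obtain ⟨i, rfl⟩ := hx
    exact ⟨_, _, blockDiag3_eq _ _⟩
  | one => exact ⟨1, 1, Fblk_one⟩
  | mul a b _ _ ha hb =>
    obtain ⟨X, Y, rfl⟩ := ha
    obtain ⟨X', Y', rfl⟩ := hb
    exact ⟨X * X', Y * Y', Fblk_mul 0 0 X Y X' Y'⟩

lemma intersperse_prod_form (B : Matrix (Fin 6) (Fin 6) ℕ) (Xb Yb)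
    (hB : B = Fblk 1 Xb Yb) :
    ∀ L : List (Matrix (Fin 6) (Fin 6) ℕ), L ≠ [] →
      (∀ P ∈ L, ∃ X Y, P = Fblk 0 X Y) →
      ∃ X Y, (L.intersperse B).prod = Fblk (L.length - 1) X Y
  | [], h, _ => absurd rfl h
  | [P], _, hL => by
      obtain ⟨X, Y, rfl⟩ := hL P (by simp)
      exact ⟨X, Y, by simp⟩
  | P :: Q :: L, _, hL => by
      obtain ⟨X, Y, hXY⟩ := intersperse_prod_form B Xb Yb hB (Q :: L) (by simp)
        (fun R hR => hL R (by simp [hR]))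
      obtain ⟨X₀, Y₀, rfl⟩ := hL P (by simp)
      refine ⟨X₀ * (Xb * X), Y₀ * (Yb * Y), ?_⟩
      have hlen : (Fblk 0 X₀ Y₀ :: Q :: L).length - 1 = 1 + ((Q :: L).length - 1) + 0 := by
        simp only [List.length_cons]
        omega
      rw [List.intersperse_cons_cons, List.prod_cons, List.prod_cons, hXY, hB,
        Fblk_mul, Fblk_mul, hlen, Nat.add_comm 1, Nat.add_comm 0]

/-- Every product `D_0 · B · D_1 · B ⋯ B · D_n` with exactly `n` factors `B`, where each
`D_j` is a product of the matrices `A_i = blockdiag(M(u_i), M(u_i), M(v_i))`, equals, viewed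
as a `3 × 3` array of `2 × 2` blocks, `[[X, n·X, 0],[0, X, 0],[0, 0, Y]]` for some `2 × 2`
matrices `X, Y` (where `n·X` is the entrywise multiple). -/
theorem prod_with_n_Bs_block_form {k : ℕ} (hk : 1 ≤ k) (u v : Fin k → List Bool)
    (hu : ∀ i, u i ≠ []) (hv : ∀ i, v i ≠ [])
    (n : ℕ) (D : Fin (n + 1) → Matrix (Fin 6) (Fin 6) ℕ)
    (hD : ∀ j, D j ∈ Submonoid.closure
      (Set.range fun i => blockDiag3 (Mword (u i)) (Mword (u i)) (Mword (v i)))) :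
    ∃ X Y : Matrix (Fin 2) (Fin 2) ℕ,
      ((List.ofFn D).intersperse (Bbig (u ⟨0, hk⟩) (v ⟨0, hk⟩))).prod =
        !![X 0 0, X 0 1, n * X 0 0, n * X 0 1, 0, 0;
           X 1 0, X 1 1, n * X 1 0, n * X 1 1, 0, 0;
           0, 0, X 0 0, X 0 1, 0, 0;
           0, 0, X 1 0, X 1 1, 0, 0;
           0, 0, 0, 0, Y 0 0, Y 0 1;
           0, 0, 0, 0, Y 1 0, Y 1 1] := by
  obtain ⟨X, Y, hXY⟩ := intersperse_prod_form (Bbig (u ⟨0, hk⟩) (v ⟨0, hk⟩)) _ _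
    (Bbig_eq _ _) (List.ofFn D) (by simp [List.ofFn_eq_nil_iff])
    (fun P hP => by
      rw [List.mem_ofFn] at hP
      obtain ⟨j, rfl⟩ := hP
      exact closure_form u v (hD j))
  refine ⟨X, Y, ?_⟩
  simpa [Fblk] using hXY
end
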